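/- arXiv:2301.11754 — 4 statements merged into one kernel-verified Lean document; each statement's English description precedes it below -/
import Mathlib

section
/- For nonnegative reals $p_1,p_2,p_3$ with $p_1+p_2+p_3=1$, and for any indices $i,j,k \in \{1,2,3\}$ with $j \neq k$, the binary entropy satisfies $H_b(p_i) \leq H_b(p_j) + H_b(p_k)$. -/
/-!
`Hb` is concave on `[0, 1]` and vanishes at `0`, hence subadditive there: `x` and `y` are convex
combinations of `0` and `x + y`. Since `Hb (1 - t) = Hb t`, for distinct indices
`Hb (p i) = Hb (p j + p k) ≤ Hb (p j) + Hb (p k)`; if `i` equals `j` or `k`, the remaining term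
is nonnegative.
-/

/-- Binary entropy function with base-2 logarithms. -/
noncomputable def Hb (t : ℝ) : ℝ := -(t * Real.logb 2 t) - (1 - t) * Real.logb 2 (1 - t)

open Real Set

theorem ConcaveOn.map_add_le_add {s : Set ℝ} {f : ℝ → ℝ} (hf : ConcaveOn ℝ s f) (h₀ : 0 ∈ s)
    (hf₀ : 0 ≤ f 0) {x y : ℝ} (hx : 0 ≤ x) (hy : 0 ≤ y) (hxy : x + y ∈ s) :
    f (x + y) ≤ f x + f y := by
  rcases (add_nonneg hx hy).eq_or_lt with hsum | hpos
  · obtain ⟨rfl, rfl⟩ : x = 0 ∧ y = 0 := ⟨by linarith, by linarith⟩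
    simpa using hf₀
  have key : ∀ {u v : ℝ}, 0 ≤ u → 0 ≤ v → u + v = x + y → u / (x + y) * f (x + y) ≤ f u := by
    intro u v hu hv huv
    have hv' : 0 ≤ v / (x + y) := div_nonneg hv hpos.le
    have h := hf.2 h₀ hxy hv' (div_nonneg hu hpos.le)
      (by rw [← add_div, add_comm, huv, div_self hpos.ne'])
    simp only [smul_eq_mul, mul_zero, zero_add, div_mul_cancel₀ _ hpos.ne'] at h
    linarith [mul_nonneg hv' hf₀]
  have := key hx hy rfl
  have := key hy hx (add_comm y x)
  have hsplit : x / (x + y) * f (x + y) + y / (x + y) * f (x + y) = f (x + y) := by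
    field_simp
  linarith

theorem Fin.sum_univ_three_of_ne {M : Type*} [AddCommMonoid M] (f : Fin 3 → M) {i j k : Fin 3}
    (hij : i ≠ j) (hik : i ≠ k) (hjk : j ≠ k) : ∑ l, f l = f i + f j + f k := by
  have huniv : ({i, j, k} : Finset (Fin 3)) = Finset.univ :=
    Finset.eq_univ_of_card _ (Finset.card_eq_three.2 ⟨i, j, k, hij, hik, hjk, rfl⟩)
  rw [← huniv, Finset.sum_insert (by simp [hij, hik]), Finset.sum_pair hjk, add_assoc]

theorem Hb_eq_binEntropy_div (t : ℝ) : Hb t = binEntropy t / log 2 := by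
  simp only [Hb, binEntropy, logb, log_inv]
  ring

theorem Hb_nonneg {t : ℝ} (h₀ : 0 ≤ t) (h₁ : t ≤ 1) : 0 ≤ Hb t := by
  rw [Hb_eq_binEntropy_div]
  exact div_nonneg (binEntropy_nonneg h₀ h₁) (log_nonneg one_le_two)

theorem Hb_one_sub (t : ℝ) : Hb (1 - t) = Hb t := by
  simp only [Hb_eq_binEntropy_div, binEntropy_one_sub]

theorem concaveOn_Hb : ConcaveOn ℝ (Icc 0 1) Hb := by
  have h := strictConcave_binEntropy.concaveOn.smul (inv_nonneg.2 (log_nonneg one_le_two))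
  have hHb : Hb = fun t => (log 2)⁻¹ • binEntropy t :=
    funext fun t => by rw [smul_eq_mul, Hb_eq_binEntropy_div, div_eq_inv_mul]
  exact hHb ▸ h

theorem Hb_add_le {a b : ℝ} (ha : 0 ≤ a) (hb : 0 ≤ b) (hab : a + b ≤ 1) :
    Hb (a + b) ≤ Hb a + Hb b :=
  concaveOn_Hb.map_add_le_add (by simp) (by simp [Hb]) ha hb ⟨add_nonneg ha hb, hab⟩

theorem Hb_le_add_of_add_add_eq_one {a b c : ℝ} (ha : 0 ≤ a) (hb : 0 ≤ b) (hc : 0 ≤ c)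
    (habc : a + b + c = 1) : Hb a ≤ Hb b + Hb c := by
  rw [← Hb_one_sub, show 1 - a = b + c by linarith]
  exact Hb_add_le hb hc (by linarith)

/-- For nonnegative reals `p₁,p₂,p₃` summing to 1, `Hb (p i) ≤ Hb (p j) + Hb (p k)`
whenever `j ≠ k`. -/
theorem stmt0 (p : Fin 3 → ℝ) (hnn : ∀ i, 0 ≤ p i) (hsum : ∑ i, p i = 1)
    (i j k : Fin 3) (hjk : j ≠ k) :
    Hb (p i) ≤ Hb (p j) + Hb (p k) := by
  have hle : ∀ l, p l ≤ 1 := fun l =>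
    hsum ▸ Finset.single_le_sum (fun m _ => hnn m) (Finset.mem_univ l)
  by_cases hij : i = j
  · rw [hij]
    linarith [Hb_nonneg (hnn k) (hle k)]
  by_cases hik : i = k
  · rw [hik]
    linarith [Hb_nonneg (hnn j) (hle j)]
  exact Hb_le_add_of_add_add_eq_one (hnn i) (hnn j) (hnn k)
    (Fin.sum_univ_three_of_ne p hij hik hjk ▸ hsum)
end

section
/- Let $(X,Y,U)$ be finitely supported random variables such that $X$ is independent of $U$, and such that for every pair $(x,u)$ in the support of $(X,U)$ there is exactly one $y$ with $P(X=x, Y=y \mid U=u) > 0$ (i.e., $H(Y \mid X, U) = 0$). Then for every $y$, defining $\mathcal{U}_y = \{u : P(X=x, Y=y, U=u) > 0 \text{ for all } x \in \mathcal{X}\}$, we have $P(U \in \mathcal{U}_y) \leq \min_{x \in \mathcal{X}} P(Y=y \mid X=x)$. -/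
open Finset
open scoped Classical

/-- For finitely supported `(X,Y,U)` with `X ⟂ U` and, for each `(x,u)` of positive
probability, a unique `y` of positive probability, the probability that `U` lands in
`𝒰_y = {u : ∀ x, P(x,y,u) > 0}` is at most `min_x P(Y=y|X=x)`. -/
theorem stmt4 {α β γ : Type*} [Fintype α] [Fintype β] [Fintype γ] [Nonempty α]
    (p : α × β × γ → ℝ) (hnn : ∀ w, 0 ≤ p w) (hsum : ∑ w, p w = 1)
    (hX : ∀ x : α, 0 < ∑ y, ∑ u, p (x, y, u))
    (hindep : ∀ (x : α) (u : γ),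
      (∑ y, p (x, y, u)) = (∑ y, ∑ u', p (x, y, u')) * (∑ x', ∑ y, p (x', y, u)))
    (huniq : ∀ (x : α) (u : γ), 0 < ∑ y, p (x, y, u) → ∃! y, 0 < p (x, y, u)) :
    ∀ y : β,
      (∑ u ∈ Finset.univ.filter (fun u => ∀ x, 0 < p (x, y, u)),
          ∑ x, ∑ y', p (x, y', u))
        ≤ Finset.univ.inf' Finset.univ_nonempty
            (fun x : α => (∑ u, p (x, y, u)) / (∑ y', ∑ u, p (x, y', u))) := by
  intro y
  apply Finset.le_inf'
  intro x _
  have hPx : 0 < ∑ y', ∑ u, p (x, y', u) := hX x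
  rw [le_div_iff₀ hPx, Finset.sum_mul]
  have key : ∀ u ∈ Finset.univ.filter (fun u => ∀ x, 0 < p (x, y, u)),
      (∑ x', ∑ y', p (x', y', u)) * (∑ y', ∑ u', p (x, y', u')) = p (x, y, u) := by
    intro u hu
    simp only [Finset.mem_filter] at hu
    have hpos : 0 < p (x, y, u) := hu.2 x
    have hspos : 0 < ∑ y', p (x, y', u) :=
      lt_of_lt_of_le hpos (Finset.single_le_sum (f := fun y' => p (x, y', u)) (fun y' _ => hnn _) (Finset.mem_univ y))
    obtain ⟨y0, _, huy⟩ := huniq x u hspos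
    have hyy0 : y = y0 := huy y hpos
    have hsum_eq : (∑ y', p (x, y', u)) = p (x, y, u) := by
      apply Finset.sum_eq_single
      · intro b _ hb
        by_contra h
        have hbpos : 0 < p (x, b, u) := lt_of_le_of_ne (hnn _) (Ne.symm h)
        exact hb ((huy b hbpos).trans hyy0.symm)
      · intro h; exact absurd (Finset.mem_univ y) h
    have := hindep x u
    rw [hsum_eq] at this
    linarith [this]
  rw [Finset.sum_congr rfl key]
  apply Finset.sum_le_sum_of_subset_of_nonneg (Finset.filter_subset _ _)
  intro u _ _
  exact hnn _
end

section
/- Let $(X,Y,U)$ be finitely supported random variables such that $X$ is independent of $U$ and for every pair $(x,u)$ with $P(X=x, U=u) > 0$ there is exactly one $y$ with $P(Y=y \mid X=x, U=u) = 1$. Then $H(Y \mid U) \geq (1 - \sum_y \min_x P(Y=y \mid X=x)) \cdot H_b(\min_x P(X=x))$. -/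
open Finset

/-- Shannon entropy (base 2) of a pmf on a finite alphabet. -/
noncomputable def ent {α : Type*} [Fintype α] (p : α → ℝ) : ℝ :=
  ∑ a, -(p a * Real.logb 2 (p a))

lemma Hb_eq (t : ℝ) : Hb t = Real.binEntropy t / Real.log 2 := by
  simp [Hb, Real.binEntropy, Real.logb, Real.log_inv]; ring

lemma Hb_mono {q t : ℝ} (hq0 : 0 ≤ q) (hqt : q ≤ t) (ht : t ≤ 1 - q) : Hb q ≤ Hb t := by
  have hq2 : q ≤ 2⁻¹ := by linarith
  rw [Hb_eq, Hb_eq]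
  have hlog : (0:ℝ) < Real.log 2 := Real.log_pos one_lt_two
  have : Real.binEntropy q ≤ Real.binEntropy t := by
    rcases le_or_gt t 2⁻¹ with h | h
    · exact Real.binEntropy_strictMonoOn.monotoneOn ⟨hq0, hq2⟩ ⟨by linarith, h⟩ hqt
    · rw [← Real.binEntropy_one_sub t]
      exact Real.binEntropy_strictMonoOn.monotoneOn ⟨hq0, hq2⟩ ⟨by linarith, by linarith⟩
        (by linarith)
  exact div_le_div_of_nonneg_right this hlog.le

lemma Hb_nonneg_s8 {q : ℝ} (h0 : 0 ≤ q) (h1 : q ≤ 1) : 0 ≤ Hb q := by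
  rw [Hb_eq]
  exact div_nonneg (Real.binEntropy_nonneg h0 h1) (Real.log_pos one_lt_two).le

lemma ent_term_nonneg {t : ℝ} (h0 : 0 ≤ t) (h1 : t ≤ 1) : 0 ≤ -(t * Real.logb 2 t) := by
  have := Real.logb_nonpos (b := 2) one_lt_two h0 h1
  nlinarith

lemma ent_nonneg {β : Type*} [Fintype β] (g : β → ℝ) (hnn : ∀ y, 0 ≤ g y)
    (hsum : ∑ y, g y = 1) : 0 ≤ ent g := by
  apply Finset.sum_nonneg
  intro y _
  exact ent_term_nonneg (hnn y) (hsum ▸ Finset.single_le_sum (fun i _ => hnn i) (mem_univ y))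

lemma ent_ge_Hb {β : Type*} [Fintype β] (g : β → ℝ) (hnn : ∀ y, 0 ≤ g y)
    (hsum : ∑ y, g y = 1) (y0 : β) : Hb (g y0) ≤ ent g := by
  classical
  set t := g y0 with ht
  have htle : t ≤ 1 := hsum ▸ Finset.single_le_sum (fun i _ => hnn i) (mem_univ y0)
  have hrest : ∑ y ∈ univ.erase y0, g y = 1 - t := by
    have := Finset.add_sum_erase univ g (mem_univ y0)
    rw [hsum] at this; linarith
  have hent : ent g = -(t * Real.logb 2 t) + ∑ y ∈ univ.erase y0, -(g y * Real.logb 2 (g y)) := by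
    rw [ent, ← Finset.add_sum_erase univ _ (mem_univ y0)]
  rw [hent, Hb]
  have key : -((1 - t) * Real.logb 2 (1 - t)) ≤ ∑ y ∈ univ.erase y0, -(g y * Real.logb 2 (g y)) := by
    rcases eq_or_lt_of_le htle with h1 | h1
    · have h0 : ∑ y ∈ univ.erase y0, g y = 0 := by rw [hrest, ← h1]; ring
      have hz := (Finset.sum_eq_zero_iff_of_nonneg (fun i _ => hnn i)).mp h0
      rw [Finset.sum_congr rfl (fun y hy => by rw [hz y hy])]
      simp [← h1]
    · have h1t : 0 < 1 - t := by linarith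
      calc -((1 - t) * Real.logb 2 (1 - t))
          = ∑ y ∈ univ.erase y0, -(g y * Real.logb 2 (1 - t)) := by
            rw [Finset.sum_neg_distrib, ← Finset.sum_mul, hrest]
        _ ≤ _ := by
            apply Finset.sum_le_sum
            intro y hy
            rcases eq_or_lt_of_le (hnn y) with h0 | h0
            · simp [← h0]
            · have hle : g y ≤ 1 - t := by
                have := Finset.single_le_sum (f := g) (fun i _ => hnn i) hy
                rw [hrest] at this; exact this
              have := Real.logb_le_logb_of_le (b := 2) one_lt_two h0 hle
              nlinarith
  linarith

/-- If `X ⟂ U` and for every `(x,u)` of positive probability there is exactly one `y`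
with `P(Y=y|X=x,U=u) = 1`, then
`H(Y|U) ≥ (1 - ∑_y min_x P(y|x)) · Hb(min_x P(X=x))`. -/
theorem stmt8 {α β γ : Type*} [Fintype α] [Fintype β] [Fintype γ] [Nonempty α]
    (p : α × β × γ → ℝ) (hnn : ∀ w, 0 ≤ p w) (hsum : ∑ w, p w = 1)
    (hβ : 2 ≤ Fintype.card β)
    (hX : ∀ x : α, 0 < ∑ y, ∑ u, p (x, y, u))
    (hindep : ∀ (x : α) (u : γ),
      (∑ y, p (x, y, u)) = (∑ y, ∑ u', p (x, y, u')) * (∑ x', ∑ y, p (x', y, u)))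
    (huniq : ∀ (x : α) (u : γ), 0 < ∑ y, p (x, y, u) →
      ∃! y : β, p (x, y, u) / (∑ y', p (x, y', u)) = 1) :
    (1 - ∑ y : β, Finset.univ.inf' Finset.univ_nonempty
          (fun x : α => (∑ u, p (x, y, u)) / (∑ y', ∑ u, p (x, y', u))))
        * Hb (Finset.univ.inf' Finset.univ_nonempty
            (fun x : α => ∑ y, ∑ u, p (x, y, u)))
      ≤ ent (fun w : β × γ => ∑ x, p (x, w.1, w.2))
          - ent (fun u : γ => ∑ x, ∑ y, p (x, y, u)) := by
  classical
  have hβne : Nonempty β := Fintype.card_pos_iff.mp (by omega)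
  set pX : α → ℝ := fun x => ∑ y, ∑ u, p (x, y, u) with hpX
  set pU : γ → ℝ := fun u => ∑ x, ∑ y, p (x, y, u) with hpU
  have hpXnn : ∀ x, 0 ≤ pX x := fun x =>
    Finset.sum_nonneg fun y _ => Finset.sum_nonneg fun u _ => hnn _
  have hpUnn : ∀ u, 0 ≤ pU u := fun u =>
    Finset.sum_nonneg fun x _ => Finset.sum_nonneg fun y _ => hnn _
  have hpXsum : ∑ x, pX x = 1 := by
    rw [← hsum, Fintype.sum_prod_type]
    exact Finset.sum_congr rfl fun x _ => by rw [Fintype.sum_prod_type]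
  have hpUsum : ∑ u, pU u = 1 := by
    rw [← hpXsum]
    rw [Finset.sum_comm]
    exact Finset.sum_congr rfl fun x _ => Finset.sum_comm
  set q : ℝ := Finset.univ.inf' Finset.univ_nonempty pX with hq
  have hq0 : 0 ≤ q := Finset.le_inf' _ _ fun x _ => hpXnn x
  have hq_le : ∀ x, q ≤ pX x := fun x => Finset.inf'_le _ (mem_univ x)
  have hq1 : q ≤ 1 := by
    obtain ⟨x⟩ := ‹Nonempty α›
    exact (hq_le x).trans (hpXsum ▸ Finset.single_le_sum (fun i _ => hpXnn i) (mem_univ x))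
  have hind : ∀ x u, (∑ y, p (x, y, u)) = pX x * pU u := fun x u => hindep x u
  -- the selector function
  set f : α → γ → β := fun x u =>
    if h : 0 < ∑ y, p (x, y, u) then (huniq x u h).exists.choose else Classical.arbitrary β
    with hf
  have hpt : ∀ x u, 0 < pU u → ∀ y, p (x, y, u) = if y = f x u then pX x * pU u else 0 := by
    intro x u hu y
    have hpos : 0 < ∑ y, p (x, y, u) := by rw [hind]; exact mul_pos (hX x) hu
    have hch : p (x, f x u, u) / (∑ y', p (x, y', u)) = 1 := by
      rw [hf]; simp only [dif_pos hpos]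
      exact (huniq x u hpos).exists.choose_spec
    have hmain : p (x, f x u, u) = ∑ y', p (x, y', u) := by
      field_simp at hch; linarith [hch]
    have hzero : ∀ y' ∈ univ.erase (f x u), p (x, y', u) = 0 := by
      have h1 := Finset.add_sum_erase univ (fun y' => p (x, y', u)) (mem_univ (f x u))
      have h2 : ∑ y' ∈ univ.erase (f x u), p (x, y', u) = 0 := by
        linarith [hmain]
      exact (Finset.sum_eq_zero_iff_of_nonneg (fun i _ => hnn _)).mp h2
    by_cases hy : y = f x u
    · rw [if_pos hy, hy, hmain, hind]
    · rw [if_neg hy]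
      exact hzero y (Finset.mem_erase.mpr ⟨hy, mem_univ y⟩)
  have hzero_u : ∀ u, pU u = 0 → ∀ x y, p (x, y, u) = 0 := by
    intro u hu x y
    have h0 : ∑ y', p (x, y', u) = 0 := by rw [hind, hu, mul_zero]
    exact (Finset.sum_eq_zero_iff_of_nonneg (fun i _ => hnn _)).mp h0 y (mem_univ y)
  -- conditional distribution of Y given U = u
  set g : γ → β → ℝ := fun u y => ∑ x ∈ univ.filter (fun x => f x u = y), pX x with hg
  have hgnn : ∀ u y, 0 ≤ g u y := fun u y => Finset.sum_nonneg fun x _ => hpXnn x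
  have hgsum : ∀ u, ∑ y, g u y = 1 := by
    intro u
    rw [hg]
    simp only
    rw [Finset.sum_fiberwise univ (fun x => f x u) pX]
    exact hpXsum
  have hg1 : ∀ u y, g u y ≤ 1 := by
    intro u y
    rw [← hgsum u]
    exact Finset.single_le_sum (fun i _ => hgnn u i) (mem_univ y)
  have hYU : ∀ y u, (∑ x, p (x, y, u)) = pU u * g u y := by
    intro y u
    rcases eq_or_lt_of_le (hpUnn u) with hu | hu
    · rw [← hu, zero_mul]
      exact Finset.sum_eq_zero fun x _ => hzero_u u hu.symm x y
    · calc ∑ x, p (x, y, u) = ∑ x, if y = f x u then pX x * pU u else 0 :=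
            Finset.sum_congr rfl fun x _ => hpt x u hu y
      _ = ∑ x ∈ univ.filter (fun x => f x u = y), pX x * pU u := by
            rw [Finset.sum_filter]
            exact Finset.sum_congr rfl fun x _ => if_congr eq_comm rfl rfl
      _ = pU u * g u y := by rw [hg]; simp only; rw [← Finset.sum_mul]; ring
  -- chain rule
  have hchain : ent (fun w : β × γ => ∑ x, p (x, w.1, w.2))
      - ent (fun u : γ => ∑ x, ∑ y, p (x, y, u)) = ∑ u, pU u * ent (g u) := by
    have hjoint : ent (fun w : β × γ => ∑ x, p (x, w.1, w.2))
        = ∑ u, (-(pU u * Real.logb 2 (pU u)) + pU u * ent (g u)) := by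
      rw [ent, Fintype.sum_prod_type, Finset.sum_comm]
      apply Finset.sum_congr rfl
      intro u _
      calc ∑ y, -((∑ x, p (x, y, u)) * Real.logb 2 (∑ x, p (x, y, u)))
          = ∑ y, -((pU u * g u y) * Real.logb 2 (pU u * g u y)) :=
            Finset.sum_congr rfl fun y _ => by rw [hYU y u]
        _ = ∑ y, (-(pU u * Real.logb 2 (pU u)) * g u y
              + pU u * -(g u y * Real.logb 2 (g u y))) := by
            apply Finset.sum_congr rfl
            intro y _
            rcases eq_or_lt_of_le (hpUnn u) with hu | hu
            · rw [← hu]; ring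
            rcases eq_or_lt_of_le (hgnn u y) with hgy | hgy
            · rw [← hgy]; ring
            · rw [Real.logb_mul (ne_of_gt hu) (ne_of_gt hgy)]; ring
        _ = -(pU u * Real.logb 2 (pU u)) + pU u * ent (g u) := by
            rw [Finset.sum_add_distrib, ← Finset.mul_sum, ← Finset.mul_sum, hgsum u, ent]
            ring
    rw [hjoint]
    simp only [ent]
    rw [Finset.sum_add_distrib]
    ring
  -- the nonconstancy set
  obtain ⟨x0⟩ := ‹Nonempty α›
  set N : Finset γ := univ.filter (fun u => ¬ ∀ x, f x u = f x0 u) with hN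
  -- per-u entropy lower bound
  have hperu : ∀ u ∈ N, Hb q ≤ ent (g u) := by
    intro u hu
    rw [hN, Finset.mem_filter] at hu
    push_neg at hu
    obtain ⟨x1, hx1⟩ := hu.2
    have hy0mem : x0 ∈ univ.filter (fun x => f x u = f x0 u) := by
      simp
    have hy1mem : x1 ∈ univ.filter (fun x => f x u = f x1 u) := by
      simp
    have ht1 : q ≤ g u (f x0 u) :=
      (hq_le x0).trans (Finset.single_le_sum (f := pX) (fun i _ => hpXnn i) hy0mem)
    have ht2 : q ≤ g u (f x1 u) :=
      (hq_le x1).trans (Finset.single_le_sum (f := pX) (fun i _ => hpXnn i) hy1mem)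
    have hpair : g u (f x0 u) + g u (f x1 u) ≤ 1 := by
      rw [← hgsum u]
      rw [← Finset.sum_pair (a := f x0 u) (b := f x1 u) (Ne.symm hx1)]
      exact Finset.sum_le_sum_of_subset_of_nonneg (Finset.subset_univ _)
        (fun i _ _ => hgnn u i)
    have := Hb_mono hq0 ht1 (by linarith)
    exact this.trans (ent_ge_Hb (g u) (hgnn u) (hgsum u) (f x0 u))
  -- bound on the constant part
  have hconst : ∑ u ∈ univ.filter (fun u => ∀ x, f x u = f x0 u), pU u
      ≤ ∑ y : β, Finset.univ.inf' Finset.univ_nonempty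
          (fun x : α => (∑ u, p (x, y, u)) / (∑ y', ∑ u, p (x, y', u))) := by
    have hfib : ∑ u ∈ univ.filter (fun u => ∀ x, f x u = f x0 u), pU u
        = ∑ y : β, ∑ u ∈ (univ.filter (fun u => ∀ x, f x u = f x0 u)).filter
            (fun u => f x0 u = y), pU u :=
      (Finset.sum_fiberwise _ (fun u => f x0 u) pU).symm
    rw [hfib]
    apply Finset.sum_le_sum
    intro y _
    apply Finset.le_inf'
    intro x _
    have hXx : (0:ℝ) < ∑ y', ∑ u, p (x, y', u) := hX x
    rw [le_div_iff₀ hXx]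
    have key : ∀ u ∈ (univ.filter (fun u => ∀ x, f x u = f x0 u)).filter
        (fun u => f x0 u = y), pU u * pX x ≤ p (x, y, u) := by
      intro u hu
      rw [Finset.mem_filter, Finset.mem_filter] at hu
      obtain ⟨⟨_, hcst⟩, hval⟩ := hu
      rcases eq_or_lt_of_le (hpUnn u) with h0 | h0
      · rw [← h0, zero_mul]; exact hnn _
      · have hp := hpt x u h0 y
        rw [if_pos (by rw [hcst x, hval])] at hp
        rw [hp]; linarith [mul_comm (pU u) (pX x)]
    calc (∑ u ∈ (univ.filter (fun u => ∀ x, f x u = f x0 u)).filter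
            (fun u => f x0 u = y), pU u) * (∑ y', ∑ u, p (x, y', u))
        = ∑ u ∈ (univ.filter (fun u => ∀ x, f x u = f x0 u)).filter
            (fun u => f x0 u = y), pU u * pX x := by rw [Finset.sum_mul]
      _ ≤ ∑ u ∈ (univ.filter (fun u => ∀ x, f x u = f x0 u)).filter
            (fun u => f x0 u = y), p (x, y, u) := Finset.sum_le_sum key
      _ ≤ ∑ u, p (x, y, u) :=
          Finset.sum_le_sum_of_subset_of_nonneg (Finset.subset_univ _) (fun u _ _ => hnn _)
  -- combine
  have hsplit : ∑ u ∈ N, pU u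
      = 1 - ∑ u ∈ univ.filter (fun u => ∀ x, f x u = f x0 u), pU u := by
    have := Finset.sum_filter_add_sum_filter_not univ (fun u => ∀ x, f x u = f x0 u) pU
    rw [hpUsum] at this
    rw [hN]; linarith
  have hHbq : 0 ≤ Hb q := Hb_nonneg_s8 hq0 hq1
  have step1 : (1 - ∑ y : β, Finset.univ.inf' Finset.univ_nonempty
          (fun x : α => (∑ u, p (x, y, u)) / (∑ y', ∑ u, p (x, y', u)))) * Hb q
      ≤ (∑ u ∈ N, pU u) * Hb q := by
    apply mul_le_mul_of_nonneg_right _ hHbq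
    rw [hsplit]; linarith [hconst]
  have step2 : (∑ u ∈ N, pU u) * Hb q ≤ ∑ u, pU u * ent (g u) := by
    rw [Finset.sum_mul]
    have h1 : ∑ u ∈ N, pU u * Hb q ≤ ∑ u ∈ N, pU u * ent (g u) :=
      Finset.sum_le_sum fun u hu => mul_le_mul_of_nonneg_left (hperu u hu) (hpUnn u)
    have h2 : ∑ u ∈ N, pU u * ent (g u) ≤ ∑ u, pU u * ent (g u) :=
      Finset.sum_le_sum_of_subset_of_nonneg (Finset.subset_univ N)
        (fun u _ _ => mul_nonneg (hpUnn u) (ent_nonneg (g u) (hgnn u) (hgsum u)))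
    linarith
  rw [hchain]
  exact step1.trans step2
end

section
/- Let $X - Y - U$ be a Markov chain of finitely supported random variables such that $X$ is independent of $U$ and $X$ is binary. If for some realization $u$ of $U$ the conditional distribution $P(Y = \cdot \mid U = u)$ is supported on exactly two points $y', y''$, then $P(X = x_0)$ lies in the closed interval between $P(X = x_0 \mid Y = y')$ and $P(X = x_0 \mid Y = y'')$, and specifically $P(Y = y' \mid U = u) = \frac{P(x_0 \mid y'') - P(x_0)}{P(x_0 \mid y'') - P(x_0 \mid y')}$ whenever $P(x_0 \mid y') \neq P(x_0 \mid y'')$. -/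
open Finset

/-- Marginal of `X` (first coordinate). -/
noncomputable def pX {β γ : Type*} [Fintype β] [Fintype γ]
    (p : Fin 2 × β × γ → ℝ) (x : Fin 2) : ℝ := ∑ y, ∑ u, p (x, y, u)

/-- Marginal of `Y`. -/
noncomputable def pY {β γ : Type*} [Fintype β] [Fintype γ]
    (p : Fin 2 × β × γ → ℝ) (y : β) : ℝ := ∑ x, ∑ u, p (x, y, u)

/-- Marginal of `U`. -/
noncomputable def pU {β γ : Type*} [Fintype β] [Fintype γ]
    (p : Fin 2 × β × γ → ℝ) (u : γ) : ℝ := ∑ x, ∑ y, p (x, y, u)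

/-- Joint marginal of `(X,Y)`. -/
noncomputable def pXY {β γ : Type*} [Fintype β] [Fintype γ]
    (p : Fin 2 × β × γ → ℝ) (x : Fin 2) (y : β) : ℝ := ∑ u, p (x, y, u)

/-- Joint marginal of `(Y,U)`. -/
noncomputable def pYU {β γ : Type*} [Fintype β] [Fintype γ]
    (p : Fin 2 × β × γ → ℝ) (y : β) (u : γ) : ℝ := ∑ x, p (x, y, u)

/-- For a Markov chain `X - Y - U` with binary `X`, `X ⟂ U`, if the conditional
law of `Y` given `U = u` is supported on exactly two points `y', y''`, then `P(X=x₀)`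
lies between `P(x₀|y')` and `P(x₀|y'')`, and (when these differ)
`P(Y=y'|U=u) = (P(x₀|y'') - P(x₀)) / (P(x₀|y'') - P(x₀|y'))`. -/
theorem stmt9 {β γ : Type*} [Fintype β] [Fintype γ]
    (p : Fin 2 × β × γ → ℝ) (hnn : ∀ w, 0 ≤ p w) (hsum : ∑ w, p w = 1)
    (hmarkov : ∀ (x : Fin 2) (y : β) (u : γ), 0 < pY p y →
      p (x, y, u) * pY p y = pXY p x y * pYU p y u)
    (hindep : ∀ (x : Fin 2) (u : γ), (∑ y, p (x, y, u)) = pX p x * pU p u)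
    (u : γ) (hu : 0 < pU p u)
    (y' y'' : β) (hne : y' ≠ y'')
    (h1 : 0 < pYU p y' u) (h2 : 0 < pYU p y'' u)
    (h3 : ∀ y : β, y ≠ y' → y ≠ y'' → pYU p y u = 0) :
    pX p 0 ∈ Set.Icc
        (min (pXY p 0 y' / pY p y') (pXY p 0 y'' / pY p y''))
        (max (pXY p 0 y' / pY p y') (pXY p 0 y'' / pY p y''))
      ∧ (pXY p 0 y' / pY p y' ≠ pXY p 0 y'' / pY p y'' →
          pYU p y' u / pU p u
            = (pXY p 0 y'' / pY p y'' - pX p 0)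
                / (pXY p 0 y'' / pY p y'' - pXY p 0 y' / pY p y')) := by
  classical
  set a := pXY p 0 y' / pY p y' with ha
  set b := pXY p 0 y'' / pY p y'' with hb
  have hYle : ∀ y, pYU p y u ≤ pY p y := by
    intro y
    have hrw : pY p y = ∑ u', pYU p y u' := by
      simp only [pY, pYU]
      rw [Finset.sum_comm]
    rw [hrw]
    exact Finset.single_le_sum (f := fun u' => pYU p y u')
      (fun u' _ => Finset.sum_nonneg fun x _ => hnn _) (Finset.mem_univ u)
  have hY' : 0 < pY p y' := lt_of_lt_of_le h1 (hYle y')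
  have hY'' : 0 < pY p y'' := lt_of_lt_of_le h2 (hYle y'')
  have hp0' : p (0, y', u) = a * pYU p y' u := by
    have h := hmarkov 0 y' u hY'
    rw [ha]
    field_simp
    linarith [h]
  have hp0'' : p (0, y'', u) = b * pYU p y'' u := by
    have h := hmarkov 0 y'' u hY''
    rw [hb]
    field_simp
    linarith [h]
  have hzero : ∀ y, y ≠ y' → y ≠ y'' → p (0, y, u) = 0 := by
    intro y hy1 hy2
    have h := h3 y hy1 hy2
    exact (Finset.sum_eq_zero_iff_of_nonneg (fun x _ => hnn _)).1 h 0 (Finset.mem_univ 0)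
  have hsum0 : ∑ y, p (0, y, u) = p (0, y', u) + p (0, y'', u) := by
    have hs : ∑ y, p (0, y, u) = ∑ y ∈ ({y', y''} : Finset β), p (0, y, u) := by
      refine (Finset.sum_subset (Finset.subset_univ _) ?_).symm
      intro y _ hy
      simp only [Finset.mem_insert, Finset.mem_singleton, not_or] at hy
      exact hzero y hy.1 hy.2
    rw [hs, Finset.sum_pair hne]
  have hpUeq : pU p u = pYU p y' u + pYU p y'' u := by
    have hrw : pU p u = ∑ y, pYU p y u := by
      simp only [pU, pYU]
      rw [Finset.sum_comm]
    have hs : ∑ y, pYU p y u = ∑ y ∈ ({y', y''} : Finset β), pYU p y u := by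
      refine (Finset.sum_subset (Finset.subset_univ _) ?_).symm
      intro y _ hy
      simp only [Finset.mem_insert, Finset.mem_singleton, not_or] at hy
      exact h3 y hy.1 hy.2
    rw [hrw, hs, Finset.sum_pair hne]
  have key : pX p 0 * (pYU p y' u + pYU p y'' u)
      = a * pYU p y' u + b * pYU p y'' u := by
    rw [← hpUeq, ← hindep 0 u, hsum0, hp0', hp0'']
  constructor
  · constructor
    · rcases le_total a b with h | h
      · rw [min_eq_left h]
        nlinarith [mul_nonneg (sub_nonneg.2 h) h2.le]
      · rw [min_eq_right h]
        nlinarith [mul_nonneg (sub_nonneg.2 h) h1.le]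
    · rcases le_total a b with h | h
      · rw [max_eq_right h]
        nlinarith [mul_nonneg (sub_nonneg.2 h) h1.le]
      · rw [max_eq_left h]
        nlinarith [mul_nonneg (sub_nonneg.2 h) h2.le]
  · intro hab
    rw [hpUeq, div_eq_div_iff (by linarith) (sub_ne_zero.2 (Ne.symm hab))]
    linear_combination key
end
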